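/- arXiv:2112.00135 — 3 statements merged into one kernel-verified Lean document; each statement's English description precedes it below -/
import Mathlib

section
/- Let F : D → ℝⁿ be a locally Lipschitz vector field on an open set D ⊆ ℝⁿ, and let R, R̃ : ℝⁿ → ℝⁿ be linear involutions preserving D that are reversing symmetries of F (R ∘ F = −F ∘ R and R̃ ∘ F = −F ∘ R̃ on D). Let u : ℝ → D solve u' = F(u) on ℝ, with R(u(0)) = u(0) and R̃(u(T₀)) = u(T₀) for some T₀ > 0. Then for every m ∈ ℤ and every t ∈ ℝ one has u(2mT₀ + t) = (R̃ ∘ R)ᵐ(u(t)). In particular, if (R̃ ∘ R)ᴹ = id for some positive integer M, then u is periodic with period 2MT₀, i.e. u(t + 2MT₀) = u(t) for all t ∈ ℝ. -/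
/-!
Each fixed point of a reversing symmetry on the orbit is a centre of time reversal: if
`S (u c) = u c`, then `t ↦ S (u (c - t))` solves the same equation and agrees with `u (c + t)` at
`t = 0`, so by uniqueness `u (c + t) = S (u (c - t))`. Reflecting the time axis about `0` and then
about `T₀` is the translation by `2T₀`, which therefore acts on the orbit as `R̃ ∘ R`; iterating gives
the powers, and `(R̃ ∘ R)ᴹ = id` makes `2MT₀` a period.
-/

open Set Topology

section ODE

variable {E : Type*} [NormedAddCommGroup E] [NormedSpace ℝ E] {D : Set E} {F : E → E}

/-- The coincidence set of two solutions is open by local uniqueness, and closed. -/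
theorem ODE_solution_unique_univ_of_locallyLipschitzOn (hD : IsOpen D)
    (hF : LocallyLipschitzOn D F) {f g : ℝ → E} (hfD : ∀ t, f t ∈ D)
    (hf : ∀ t, HasDerivAt f (F (f t)) t) (hg : ∀ t, HasDerivAt g (F (g t)) t)
    {t₀ : ℝ} (heq : f t₀ = g t₀) : f = g := by
  have hopen : IsOpen {t | f t = g t} := by
    refine isOpen_iff_mem_nhds.2 fun t (ht : f t = g t) => ?_
    obtain ⟨K, s, hs, hK⟩ := hF (hfD t)
    rw [hD.nhdsWithin_eq (hfD t)] at hs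
    have hfs : ∀ᶠ τ in 𝓝 t, f τ ∈ s := (hf t).continuousAt.preimage_mem_nhds hs
    have hgs : ∀ᶠ τ in 𝓝 t, g τ ∈ s := (hg t).continuousAt.preimage_mem_nhds (ht ▸ hs)
    exact ODE_solution_unique_of_eventually (v := fun _ => F) (s := fun _ => s)
      (.of_forall fun _ => hK) (hfs.mono fun τ hτ => ⟨hf τ, hτ⟩)
      (hgs.mono fun τ hτ => ⟨hg τ, hτ⟩) ht
  have hclosed : IsClosed {t | f t = g t} :=
    isClosed_eq (continuous_iff_continuousAt.2 fun t => (hf t).continuousAt)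
      (continuous_iff_continuousAt.2 fun t => (hg t).continuousAt)
  funext t
  exact eq_univ_iff_forall.1 (IsClopen.eq_univ ⟨hclosed, hopen⟩ ⟨t₀, heq⟩) t

theorem hasDerivAt_reversingSymmetry_comp_const_sub {S : E →L[ℝ] E}
    (hS : ∀ p ∈ D, S (F p) = -F (S p)) {u : ℝ → E} (hu : ∀ t, u t ∈ D)
    (hode : ∀ t, HasDerivAt u (F (u t)) t) (c t : ℝ) :
    HasDerivAt (fun τ => S (u (c - τ))) (F (S (u (c - t)))) t := by
  have h := S.hasFDerivAt.comp_hasDerivAt t ((hode (c - t)).comp_const_sub c t)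
  rwa [map_neg, hS _ (hu _), neg_neg] at h

theorem apply_add_eq_reversingSymmetry_apply_sub (hD : IsOpen D) (hF : LocallyLipschitzOn D F)
    {S : E →L[ℝ] E} (hS : ∀ p ∈ D, S (F p) = -F (S p)) {u : ℝ → E} (hu : ∀ t, u t ∈ D)
    (hode : ∀ t, HasDerivAt u (F (u t)) t) {c : ℝ} (hfix : S (u c) = u c) (t : ℝ) :
    u (c + t) = S (u (c - t)) :=
  congrFun (ODE_solution_unique_univ_of_locallyLipschitzOn hD hF (fun τ => hu (c + τ))
    (fun τ => (hode (c + τ)).comp_const_add c τ)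
    (hasDerivAt_reversingSymmetry_comp_const_sub hS hu hode c)
    (t₀ := 0) (by simpa using hfix.symm)) t

end ODE

section Translation

variable {A α : Type*} [AddCommGroup A] {φ : A → α}

theorem apply_two_nsmul_sub_add_eq_of_reflections {f g : α → α} {a b : A}
    (hf : ∀ t, φ (a + t) = f (φ (a - t))) (hg : ∀ t, φ (b + t) = g (φ (b - t))) (t : A) :
    φ (2 • (b - a) + t) = g (f (φ t)) := by
  calc φ (2 • (b - a) + t) = φ (b + (b - 2 • a + t)) := by congr 1; abel
    _ = g (φ (a + (a - t))) := by rw [hg]; congr 2; abel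
    _ = g (f (φ t)) := by rw [hf, sub_sub_cancel]

theorem apply_zsmul_add_eq_zpow_smul {G : Type*} [Group G] [MulAction G α] {a : A} {g : G}
    (h : ∀ t, φ (a + t) = g • φ t) (m : ℤ) (t : A) : φ (m • a + t) = g ^ m • φ t := by
  induction m using Int.induction_on generalizing t with
  | zero => simp
  | succ k ih => rw [add_zsmul, one_zsmul, add_assoc, ih, h, smul_smul, zpow_add_one]
  | pred k ih =>
    have hback : φ (-a + t) = g⁻¹ • φ t := eq_inv_smul_iff.2 (by rw [← h, add_neg_cancel_left])
    rw [sub_zsmul, one_zsmul, sub_eq_add_neg, add_assoc, ih, hback, smul_smul, zpow_add, zpow_neg_one]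

end Translation

theorem reversing_symmetries_periodic_orbit_general {n : ℕ}
    (D : Set (Fin n → ℝ)) (hD : IsOpen D)
    (F : (Fin n → ℝ) → (Fin n → ℝ))
    (hF : ∀ p ∈ D, ∃ K : NNReal, ∃ s ∈ nhdsWithin p D, LipschitzOnWith K F s)
    (R R' : (Fin n → ℝ) ≃ₗ[ℝ] (Fin n → ℝ))
    (hRrev : ∀ p ∈ D, R (F p) = -F (R p))
    (hR'rev : ∀ p ∈ D, R' (F p) = -F (R' p))
    (u : ℝ → (Fin n → ℝ))
    (hu : ∀ t : ℝ, u t ∈ D)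
    (hode : ∀ t : ℝ, HasDerivAt u (F (u t)) t)
    (T₀ : ℝ)
    (hfix0 : R (u 0) = u 0)
    (hfixT : R' (u T₀) = u T₀) :
    (∀ m : ℤ, ∀ t : ℝ, u (2 * (m : ℝ) * T₀ + t) = ((R' * R) ^ m) (u t)) ∧
    (∀ M : ℕ, 0 < M → (R' * R) ^ (M : ℤ) = 1 →
      ∀ t : ℝ, u (t + 2 * (M : ℝ) * T₀) = u t) := by
  have hR := apply_add_eq_reversingSymmetry_apply_sub hD (fun _ => hF _)
    (S := LinearMap.toContinuousLinearMap R.toLinearMap) hRrev hu hode hfix0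
  have hR' := apply_add_eq_reversingSymmetry_apply_sub hD (fun _ => hF _)
    (S := LinearMap.toContinuousLinearMap R'.toLinearMap) hR'rev hu hode hfixT
  have htrans : ∀ t, u (2 * T₀ + t) = (R' * R) • u t := fun t => by
    simpa [two_mul] using apply_two_nsmul_sub_add_eq_of_reflections hR hR' t
  have hiter : ∀ m : ℤ, ∀ t : ℝ, u (2 * (m : ℝ) * T₀ + t) = ((R' * R) ^ m) (u t) := fun m t => by
    simpa [zsmul_eq_mul, mul_left_comm, mul_assoc] using
      apply_zsmul_add_eq_zpow_smul htrans m t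
  refine ⟨hiter, fun M _ hM t => ?_⟩
  simpa [hM, add_comm] using hiter M t

/-- Let `F : D → ℝⁿ` be a locally Lipschitz vector field on an open set `D ⊆ ℝⁿ`, and let
`R, R̃` be linear involutions preserving `D` that are reversing symmetries of `F`.
If `u : ℝ → D` solves `u' = F(u)` on `ℝ` with `R(u(0)) = u(0)` and `R̃(u(T₀)) = u(T₀)` for
some `T₀ > 0`, then `u(2mT₀ + t) = (R̃ ∘ R)ᵐ(u(t))` for every `m ∈ ℤ` and `t ∈ ℝ`; in
particular, if `(R̃ ∘ R)ᴹ = id` for some positive integer `M`, then `u` is `2MT₀`-periodic.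
(Here `R̃ ∘ R` is the linear automorphism `R' * R`, and integer powers are taken in the
automorphism group.) -/
theorem reversing_symmetries_periodic_orbit {n : ℕ}
    (D : Set (Fin n → ℝ)) (hD : IsOpen D)
    (F : (Fin n → ℝ) → (Fin n → ℝ))
    (hF : ∀ p ∈ D, ∃ K : NNReal, ∃ s ∈ nhdsWithin p D, LipschitzOnWith K F s)
    (R R' : (Fin n → ℝ) ≃ₗ[ℝ] (Fin n → ℝ))
    (hRinv : ∀ p, R (R p) = p) (hR'inv : ∀ p, R' (R' p) = p)
    (hRD : R '' D = D) (hR'D : R' '' D = D)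
    (hRrev : ∀ p ∈ D, R (F p) = -F (R p))
    (hR'rev : ∀ p ∈ D, R' (F p) = -F (R' p))
    (u : ℝ → (Fin n → ℝ))
    (hu : ∀ t : ℝ, u t ∈ D)
    (hode : ∀ t : ℝ, HasDerivAt u (F (u t)) t)
    (T₀ : ℝ) (hT₀ : 0 < T₀)
    (hfix0 : R (u 0) = u 0)
    (hfixT : R' (u T₀) = u T₀) :
    (∀ m : ℤ, ∀ t : ℝ, u (2 * (m : ℝ) * T₀ + t) = ((R' * R) ^ m) (u t)) ∧
    (∀ M : ℕ, 0 < M → (R' * R) ^ (M : ℤ) = 1 →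
      ∀ t : ℝ, u (t + 2 * (M : ℝ) * T₀) = u t) :=
  reversing_symmetries_periodic_orbit_general D hD F hF R R' hRrev hR'rev u hu hode T₀ hfix0 hfixT
end

section
/- For every μ ∈ (0, 1/2], the equilibrium points of the spatial Hill four-body problem are exactly four: the set of points (x,y,z) ∈ ℝ³∖{(0,0,0)} at which the gradient of Ω vanishes (equivalently, at which the vector field F vanishes together with zero velocity) is precisely { (λ₂^{−1/3}, 0, 0), (−λ₂^{−1/3}, 0, 0), (0, λ₁^{−1/3}, 0), (0, −λ₁^{−1/3}, 0) }. -/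
/-!
With `r = √(x² + y² + z²)`, the gradient of `Ω` is
`(x (λ₂ - r⁻³), y (λ₁ - r⁻³), -z (1 + r⁻³))`. The last factor never vanishes, so `z = 0`, and
since `λ₁ < λ₂` the first two factors cannot vanish together: an equilibrium lies on the `x`- or
the `y`-axis, where `r = |x|` (resp. `|y|`) and `r³ = 1/λ₂` (resp. `1/λ₁`).
-/

noncomputable section

/-- `d = √(1 − 3μ + 3μ²)`. -/
def dparam (μ : ℝ) : ℝ := Real.sqrt (1 - 3*μ + 3*μ^2)

/-- `λ₂ = (3/2)(1 + d)`. -/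
def lam2 (μ : ℝ) : ℝ := (3/2) * (1 + dparam μ)

/-- `λ₁ = (3/2)(1 − d)`. -/
def lam1 (μ : ℝ) : ℝ := (3/2) * (1 - dparam μ)

/-- The effective potential `Ω(x,y,z) = (1/2)(λ₂x² + λ₁y² − z²) + 1/√(x²+y²+z²)`. -/
def Omega (μ x y z : ℝ) : ℝ :=
  (1/2) * (lam2 μ * x^2 + lam1 μ * y^2 - z^2) + 1 / Real.sqrt (x^2 + y^2 + z^2)

/-- `∂Ω/∂x`. -/
def Omegax (μ x y z : ℝ) : ℝ := deriv (fun s => Omega μ s y z) x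

/-- `∂Ω/∂y`. -/
def Omegay (μ x y z : ℝ) : ℝ := deriv (fun s => Omega μ x s z) y

/-- `∂Ω/∂z`. -/
def Omegaz (μ x y z : ℝ) : ℝ := deriv (fun s => Omega μ x y s) z

open Real

lemma dparam_pos (μ : ℝ) : 0 < dparam μ :=
  sqrt_pos.2 (by nlinarith [sq_nonneg (2 * μ - 1)])

lemma dparam_lt_one {μ : ℝ} (h₀ : 0 < μ) (h₁ : μ < 1) : dparam μ < 1 := by
  rw [dparam, sqrt_lt' one_pos]
  nlinarith

lemma lam1_pos {μ : ℝ} (h₀ : 0 < μ) (h₁ : μ < 1) : 0 < lam1 μ := by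
  have := dparam_lt_one h₀ h₁
  unfold lam1
  linarith

lemma lam1_lt_lam2 (μ : ℝ) : lam1 μ < lam2 μ := by
  have := dparam_pos μ
  unfold lam1 lam2
  linarith

lemma hasDerivAt_inv_sqrt_sq_add {a c : ℝ} (h : 0 < a ^ 2 + c) :
    HasDerivAt (fun s => (√(s ^ 2 + c))⁻¹) (-a / √(a ^ 2 + c) ^ 3) a := by
  have hr : √(a ^ 2 + c) ≠ 0 := (sqrt_pos.2 h).ne'
  have hsqrt : HasDerivAt (fun s => √(s ^ 2 + c)) (1 / (2 * √(a ^ 2 + c)) * (2 * a)) a :=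
    (hasDerivAt_sqrt h.ne').comp a (((hasDerivAt_pow 2 a).add_const c).congr_deriv (by ring))
  exact (hsqrt.inv hr).congr_deriv (by field_simp)

lemma hasDerivAt_half_mul_sq_add_inv_sqrt (k C : ℝ) {a c : ℝ} (h : 0 < a ^ 2 + c) :
    HasDerivAt (fun s => k / 2 * s ^ 2 + C + (√(s ^ 2 + c))⁻¹)
      (a * (k - (√(a ^ 2 + c) ^ 3)⁻¹)) a :=
  ((((hasDerivAt_pow 2 a).const_mul (k / 2)).add_const C).add
    (hasDerivAt_inv_sqrt_sq_add h)).congr_deriv (by push_cast; ring)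

section Partials

variable (μ : ℝ) {x y z : ℝ}

lemma Omegax_eq (h : 0 < x ^ 2 + y ^ 2 + z ^ 2) :
    Omegax μ x y z = x * (lam2 μ - (√(x ^ 2 + y ^ 2 + z ^ 2) ^ 3)⁻¹) := by
  have hq : x ^ 2 + y ^ 2 + z ^ 2 = x ^ 2 + (y ^ 2 + z ^ 2) := by ring
  have hΩ : (fun s => Omega μ s y z) = fun s =>
      lam2 μ / 2 * s ^ 2 + (lam1 μ * y ^ 2 - z ^ 2) / 2 + (√(s ^ 2 + (y ^ 2 + z ^ 2)))⁻¹ := by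
    funext s; simp only [Omega]; ring_nf
  rw [Omegax, hΩ, (hasDerivAt_half_mul_sq_add_inv_sqrt _ _ (hq ▸ h)).deriv, hq]

lemma Omegay_eq (h : 0 < x ^ 2 + y ^ 2 + z ^ 2) :
    Omegay μ x y z = y * (lam1 μ - (√(x ^ 2 + y ^ 2 + z ^ 2) ^ 3)⁻¹) := by
  have hq : x ^ 2 + y ^ 2 + z ^ 2 = y ^ 2 + (x ^ 2 + z ^ 2) := by ring
  have hΩ : (fun s => Omega μ x s z) = fun s =>
      lam1 μ / 2 * s ^ 2 + (lam2 μ * x ^ 2 - z ^ 2) / 2 + (√(s ^ 2 + (x ^ 2 + z ^ 2)))⁻¹ := by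
    funext s; simp only [Omega]; ring_nf
  rw [Omegay, hΩ, (hasDerivAt_half_mul_sq_add_inv_sqrt _ _ (hq ▸ h)).deriv, hq]

lemma Omegaz_eq (h : 0 < x ^ 2 + y ^ 2 + z ^ 2) :
    Omegaz μ x y z = z * (-1 - (√(x ^ 2 + y ^ 2 + z ^ 2) ^ 3)⁻¹) := by
  have hq : x ^ 2 + y ^ 2 + z ^ 2 = z ^ 2 + (x ^ 2 + y ^ 2) := by ring
  have hΩ : (fun s => Omega μ x y s) = fun s =>
      -1 / 2 * s ^ 2 + (lam2 μ * x ^ 2 + lam1 μ * y ^ 2) / 2 + (√(s ^ 2 + (x ^ 2 + y ^ 2)))⁻¹ := by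
    funext s; simp only [Omega]; ring_nf
  rw [Omegaz, hΩ, (hasDerivAt_half_mul_sq_add_inv_sqrt _ _ (hq ▸ h)).deriv, hq]

end Partials

lemma sq_add_sq_add_sq_pos {x y z : ℝ} (h : (x, y, z) ≠ (0, 0, 0)) :
    0 < x ^ 2 + y ^ 2 + z ^ 2 := by
  contrapose! h
  simp only [Prod.mk.injEq]
  refine ⟨?_, ?_, ?_⟩ <;> nlinarith [sq_nonneg x, sq_nonneg y, sq_nonneg z]

lemma abs_pow_three_eq_inv_iff {k a : ℝ} (hk : 0 < k) :
    |a| ^ 3 = k⁻¹ ↔ a = k ^ (-(1:ℝ)/3) ∨ a = -(k ^ (-(1:ℝ)/3)) := by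
  have hc : 0 < k ^ (-(1:ℝ)/3) := rpow_pos_of_pos hk _
  have hc3 : (k ^ (-(1:ℝ)/3)) ^ 3 = k⁻¹ := by
    rw [← rpow_natCast, ← rpow_mul hk.le]; norm_num [rpow_neg_one]
  rw [← hc3, pow_left_inj₀ (abs_nonneg a) hc.le three_ne_zero, abs_eq hc.le]

lemma sub_inv_sqrt_sq_pow_three_eq_zero_iff {k a : ℝ} (hk : 0 < k) :
    k - (√(a ^ 2) ^ 3)⁻¹ = 0 ↔ a = k ^ (-(1:ℝ)/3) ∨ a = -(k ^ (-(1:ℝ)/3)) := by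
  rw [sqrt_sq_eq_abs, sub_eq_zero, eq_comm, inv_eq_iff_eq_inv, abs_pow_three_eq_inv_iff hk]

theorem setOf_critical_eq {k₁ k₂ : ℝ} (hk₁ : 0 < k₁) (hk₁₂ : k₁ < k₂) :
    {p : ℝ × ℝ × ℝ | p ≠ (0, 0, 0) ∧
        p.1 * (k₂ - (√(p.1 ^ 2 + p.2.1 ^ 2 + p.2.2 ^ 2) ^ 3)⁻¹) = 0 ∧
        p.2.1 * (k₁ - (√(p.1 ^ 2 + p.2.1 ^ 2 + p.2.2 ^ 2) ^ 3)⁻¹) = 0 ∧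
        p.2.2 * (-1 - (√(p.1 ^ 2 + p.2.1 ^ 2 + p.2.2 ^ 2) ^ 3)⁻¹) = 0}
      = ({(k₂ ^ (-(1:ℝ)/3), 0, 0), (-(k₂ ^ (-(1:ℝ)/3)), 0, 0),
          (0, k₁ ^ (-(1:ℝ)/3), 0), (0, -(k₁ ^ (-(1:ℝ)/3)), 0)} : Set (ℝ × ℝ × ℝ)) := by
  have hk₂ : 0 < k₂ := hk₁.trans hk₁₂
  ext ⟨x, y, z⟩
  simp only [Set.mem_ofPred_eq, Set.mem_insert_iff, Set.mem_singleton_iff, Prod.mk.injEq]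
  constructor
  · rintro ⟨hp, hx, hy, hz⟩
    have hz0 : z = 0 := (mul_eq_zero.1 hz).resolve_right (by
      have : 0 ≤ (√(x ^ 2 + y ^ 2 + z ^ 2) ^ 3)⁻¹ := by positivity
      linarith)
    subst hz0
    rcases eq_or_ne x 0 with rfl | hx0
    · have hy0 : y ≠ 0 := fun hy0 => hp (by simp [hy0])
      have := (mul_eq_zero.1 hy).resolve_left hy0
      rw [show (0:ℝ) ^ 2 + y ^ 2 + 0 ^ 2 = y ^ 2 by ring,
        sub_inv_sqrt_sq_pow_three_eq_zero_iff hk₁] at this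
      tauto
    · have hx' := (mul_eq_zero.1 hx).resolve_left hx0
      have hy0 : y = 0 := (mul_eq_zero.1 hy).resolve_right (by linarith)
      subst hy0
      rw [show x ^ 2 + (0:ℝ) ^ 2 + 0 ^ 2 = x ^ 2 by ring,
        sub_inv_sqrt_sq_pow_three_eq_zero_iff hk₂] at hx'
      tauto
  · have ha := (rpow_pos_of_pos hk₂ (-(1:ℝ)/3)).ne'
    have hb := (rpow_pos_of_pos hk₁ (-(1:ℝ)/3)).ne'
    rintro (⟨rfl, rfl, rfl⟩ | ⟨rfl, rfl, rfl⟩ | ⟨rfl, rfl, rfl⟩ | ⟨rfl, rfl, rfl⟩) <;>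
      simp only [ne_eq, Prod.mk.injEq, neg_eq_zero, ha, hb, zero_pow two_ne_zero, add_zero,
        zero_add, zero_mul, mul_eq_zero, sub_inv_sqrt_sq_pow_three_eq_zero_iff hk₁,
        sub_inv_sqrt_sq_pow_three_eq_zero_iff hk₂] <;> tauto

/-- For every `μ ∈ (0, 1/2]`, the equilibrium points of the spatial Hill four-body problem
are exactly four: the set of points of `ℝ³ ∖ {0}` at which the gradient of `Ω` vanishes is
precisely `{(λ₂^{−1/3},0,0), (−λ₂^{−1/3},0,0), (0,λ₁^{−1/3},0), (0,−λ₁^{−1/3},0)}`. -/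
theorem equilibrium_points (μ : ℝ) (hμ : μ ∈ Set.Ioc (0:ℝ) (1/2)) :
    {p : ℝ × ℝ × ℝ | p ≠ (0, 0, 0) ∧
        Omegax μ p.1 p.2.1 p.2.2 = 0 ∧
        Omegay μ p.1 p.2.1 p.2.2 = 0 ∧
        Omegaz μ p.1 p.2.1 p.2.2 = 0}
      = ({(lam2 μ ^ (-(1:ℝ)/3), 0, 0), (-(lam2 μ ^ (-(1:ℝ)/3)), 0, 0),
          (0, lam1 μ ^ (-(1:ℝ)/3), 0), (0, -(lam1 μ ^ (-(1:ℝ)/3)), 0)} : Set (ℝ × ℝ × ℝ)) := by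
  rw [← setOf_critical_eq (lam1_pos hμ.1 (by linarith [hμ.2])) (lam1_lt_lam2 μ)]
  refine Set.ext fun ⟨x, y, z⟩ => and_congr_right fun hp => ?_
  have hq := sq_add_sq_add_sq_pos hp
  rw [Omegax_eq μ hq, Omegay_eq μ hq, Omegaz_eq μ hq]

end
end

section
/- For μ ∈ (0,1/2] consider the planar characteristic polynomial at the equilibrium L₃ = (0, λ₁^{−1/3}, 0), namely Q(η) = η⁴ − (2λ₁ + λ₂ − 4)η² + 3λ₁(λ₂ − λ₁), and let μ₀ = (1/450)(225 − √(3(5227 + 2368√21))). Then: (i) for μ ∈ (0, μ₀), Q has four distinct purely imaginary roots, i.e. there exist ω₂ > ω₁ > 0 with roots exactly {iω₁, −iω₁, iω₂, −iω₂}; (ii) for μ = μ₀, Q has a pair of purely imaginary roots ±iω, each of multiplicity 2, for some ω > 0; (iii) for μ ∈ (μ₀, 1/2], there exist α > 0 and ω > 0 such that the roots of Q are exactly {α + iω, α − iω, −α + iω, −α − iω}. -/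
/- Spatial Hill four-body problem: vector field and (reversing) symmetries. -/

noncomputable section

/-- `μ₀ = (1/450)(225 − √(3(5227 + 2368√21)))`. -/
noncomputable def mu0 : ℝ := (1/450) * (225 - Real.sqrt (3 * (5227 + 2368 * Real.sqrt 21)))

/-- The set of complex roots of the planar characteristic polynomial
`Q(η) = η⁴ − (2λ₁ + λ₂ − 4)η² + 3λ₁(λ₂ − λ₁)` at the equilibrium `L₃`. -/
def rootSetL3 (μ : ℝ) : Set ℂ :=
  {η : ℂ | η^4 - ((2 * lam1 μ + lam2 μ - 4 : ℝ) : ℂ) * η^2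
      + ((3 * lam1 μ * (lam2 μ - lam1 μ) : ℝ) : ℂ) = 0}


lemma quartic_double (b c : ℝ) (hb : b < 0) (hd : b^2 = 4*c) :
    ∃ ω : ℝ, 0 < ω ∧ ∀ η : ℂ, η^4 - (b:ℂ)*η^2 + (c:ℂ)
      = (η - Complex.I*(ω:ℂ))^2*(η + Complex.I*(ω:ℂ))^2 := by
  refine ⟨Real.sqrt (-b/2), Real.sqrt_pos.mpr (by linarith), fun η => ?_⟩
  have hω2 : Real.sqrt (-b/2) ^ 2 = -b/2 := Real.sq_sqrt (by linarith)
  have hwc : ((Real.sqrt (-b/2) : ℝ):ℂ)^2 = -(b:ℂ)/2 := by exact_mod_cast hω2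
  have hbc : (b:ℂ)^2 = 4*(c:ℂ) := by exact_mod_cast hd
  set w : ℂ := ((Real.sqrt (-b/2) : ℝ):ℂ)
  linear_combination (2*w^2*η^2 - w^4*(Complex.I^2-1)) * Complex.I_sq
    + (-2*η^2 - w^2 + (b:ℂ)/2) * hwc + (-1/4) * hbc

lemma quartic_two_pairs (b c : ℝ) (hb : b < 0) (hc : 0 < c) (hd : 0 < b^2 - 4*c) :
    ∃ ω₁ ω₂ : ℝ, 0 < ω₁ ∧ ω₁ < ω₂ ∧ ∀ η : ℂ, η^4 - (b:ℂ)*η^2 + (c:ℂ)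
      = (η - Complex.I*(ω₁:ℂ))*(η + Complex.I*(ω₁:ℂ))
        *((η - Complex.I*(ω₂:ℂ))*(η + Complex.I*(ω₂:ℂ))) := by
  set e := Real.sqrt (b^2 - 4*c) with he_def
  have he2 : e^2 = b^2 - 4*c := Real.sq_sqrt hd.le
  have he0 : 0 ≤ e := Real.sqrt_nonneg _
  have hepos : 0 < e := Real.sqrt_pos.mpr hd
  have helt : e < -b := by nlinarith
  have ha1 : 0 < (-b - e)/2 := by linarith
  have ha2 : (-b - e)/2 < (-b + e)/2 := by linarith
  refine ⟨Real.sqrt ((-b - e)/2), Real.sqrt ((-b + e)/2),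
    Real.sqrt_pos.mpr ha1, Real.sqrt_lt_sqrt ha1.le ha2, fun η => ?_⟩
  have hw1 : Real.sqrt ((-b - e)/2) ^ 2 = (-b - e)/2 := Real.sq_sqrt ha1.le
  have hw2 : Real.sqrt ((-b + e)/2) ^ 2 = (-b + e)/2 := Real.sq_sqrt (by linarith)
  have hsum : Real.sqrt ((-b - e)/2)^2 + Real.sqrt ((-b + e)/2)^2 = -b := by
    rw [hw1, hw2]; ring
  have hprod : Real.sqrt ((-b - e)/2)^2 * Real.sqrt ((-b + e)/2)^2 = c := by
    rw [hw1, hw2]; linear_combination (-1/4) * he2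
  have hsC : ((Real.sqrt ((-b - e)/2) :ℝ):ℂ)^2 + ((Real.sqrt ((-b + e)/2):ℝ):ℂ)^2 = -(b:ℂ) := by
    exact_mod_cast hsum
  have hpC : ((Real.sqrt ((-b - e)/2):ℝ):ℂ)^2 * ((Real.sqrt ((-b + e)/2):ℝ):ℂ)^2 = (c:ℂ) := by
    exact_mod_cast hprod
  set w1 : ℂ := ((Real.sqrt ((-b - e)/2):ℝ):ℂ)
  set w2 : ℂ := ((Real.sqrt ((-b + e)/2):ℝ):ℂ)
  linear_combination ((w1^2+w2^2)*η^2 - w1^2*w2^2*(Complex.I^2 - 1))*Complex.I_sq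
    + (-η^2)*hsC + (-1)*hpC

lemma quartic_complex_roots (b c : ℝ) (hc : 0 < c) (hd : b^2 - 4*c < 0) :
    ∃ α ω : ℝ, 0 < α ∧ 0 < ω ∧ ∀ η : ℂ, η^4 - (b:ℂ)*η^2 + (c:ℂ)
      = (η - ((α:ℂ) + Complex.I*(ω:ℂ)))*(η - ((α:ℂ) - Complex.I*(ω:ℂ)))
        *((η - (-(α:ℂ) + Complex.I*(ω:ℂ)))*(η - (-(α:ℂ) - Complex.I*(ω:ℂ)))) := by
  set sc := Real.sqrt c with hsc_def
  have hsc2 : sc^2 = c := Real.sq_sqrt hc.le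
  have hscpos : 0 < sc := Real.sqrt_pos.mpr hc
  have hp : 0 < (2*sc + b)/4 := by nlinarith
  have hq : 0 < (2*sc - b)/4 := by nlinarith
  refine ⟨Real.sqrt ((2*sc + b)/4), Real.sqrt ((2*sc - b)/4),
    Real.sqrt_pos.mpr hp, Real.sqrt_pos.mpr hq, fun η => ?_⟩
  have hα2 : Real.sqrt ((2*sc + b)/4) ^ 2 = (2*sc + b)/4 := Real.sq_sqrt hp.le
  have hω2 : Real.sqrt ((2*sc - b)/4) ^ 2 = (2*sc - b)/4 := Real.sq_sqrt hq.le
  have hA : Real.sqrt ((2*sc + b)/4)^2 - Real.sqrt ((2*sc - b)/4)^2 = b/2 := by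
    rw [hα2, hω2]; ring
  have hB : (Real.sqrt ((2*sc + b)/4)^2 + Real.sqrt ((2*sc - b)/4)^2)^2 = c := by
    rw [hα2, hω2]; linear_combination hsc2
  have hAC : ((Real.sqrt ((2*sc + b)/4):ℝ):ℂ)^2 - ((Real.sqrt ((2*sc - b)/4):ℝ):ℂ)^2 = (b:ℂ)/2 := by
    exact_mod_cast hA
  have hBC : (((Real.sqrt ((2*sc + b)/4):ℝ):ℂ)^2 + ((Real.sqrt ((2*sc - b)/4):ℝ):ℂ)^2)^2 = (c:ℂ) := by
    exact_mod_cast hB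
  set a : ℂ := ((Real.sqrt ((2*sc + b)/4):ℝ):ℂ)
  set w : ℂ := ((Real.sqrt ((2*sc - b)/4):ℝ):ℂ)
  linear_combination (2*w^2*η^2 + w^2*(2*a^2 + w^2*(1 - Complex.I^2))) * Complex.I_sq
    + (2*η^2)*hAC + (-1)*hBC

lemma mu0_exists_d0 : ∃ d0 : ℝ, 1/2 ≤ d0 ∧ d0 < 1 ∧ 225*d0^2 - 222*d0 + 1 = 0 ∧
    0 < mu0 ∧ mu0 < 1/2 ∧ 1 - 3*mu0 + 3*mu0^2 = d0^2 := by
  set s := Real.sqrt 21 with hs_def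
  have hs2 : s^2 = 21 := Real.sq_sqrt (by norm_num)
  have hs0 : 0 ≤ s := Real.sqrt_nonneg _
  have hs4 : 4 < s := by nlinarith
  have hs5 : s < 19/4 := by nlinarith
  set R := Real.sqrt (3 * (5227 + 2368 * s)) with hR_def
  have hR2 : R^2 = 15681 + 7104*s := by
    rw [hR_def, Real.sq_sqrt (by nlinarith)]; ring
  have hR0 : 0 ≤ R := Real.sqrt_nonneg _
  have hRpos : 0 < R := by nlinarith
  have hR225 : R < 225 := by nlinarith
  refine ⟨(37 + 8*s)/75, by nlinarith, by nlinarith, by nlinarith, ?_, ?_, ?_⟩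
  · rw [mu0]; nlinarith
  · rw [mu0]; nlinarith
  · rw [mu0]; linear_combination (1/67500)*hR2 - (64/5625)*hs2

/-- Classification of the roots of the planar characteristic polynomial at `L₃` for
`μ ∈ (0, 1/2]`: (i) for `μ < μ₀`, four distinct purely imaginary roots `±iω₁, ±iω₂`;
(ii) for `μ = μ₀`, a double pair `±iω` (`Q(η) = (η − iω)²(η + iω)²`);
(iii) for `μ > μ₀`, roots `±α ± iω` with `α, ω > 0`. -/
theorem L3_roots_classification (μ : ℝ) (hμ : μ ∈ Set.Ioc (0:ℝ) (1/2)) :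
    (μ < mu0 → ∃ ω₁ ω₂ : ℝ, 0 < ω₁ ∧ ω₁ < ω₂ ∧
      rootSetL3 μ = {Complex.I * (ω₁:ℂ), -(Complex.I * (ω₁:ℂ)),
                     Complex.I * (ω₂:ℂ), -(Complex.I * (ω₂:ℂ))}) ∧
    (μ = mu0 → ∃ ω : ℝ, 0 < ω ∧
      (∀ η : ℂ, η^4 - ((2 * lam1 μ + lam2 μ - 4 : ℝ) : ℂ) * η^2
          + ((3 * lam1 μ * (lam2 μ - lam1 μ) : ℝ) : ℂ)
        = (η - Complex.I * (ω:ℂ))^2 * (η + Complex.I * (ω:ℂ))^2)) ∧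
    (mu0 < μ → ∃ α ω : ℝ, 0 < α ∧ 0 < ω ∧
      rootSetL3 μ = {(α:ℂ) + Complex.I * (ω:ℂ), (α:ℂ) - Complex.I * (ω:ℂ),
                     -(α:ℂ) + Complex.I * (ω:ℂ), -(α:ℂ) - Complex.I * (ω:ℂ)}) := by
  obtain ⟨hμ0, hμ1⟩ := hμ
  obtain ⟨d0, hd0lb, hd0ub, hD0, hmu0pos, hmu0half, hm⟩ := mu0_exists_d0
  have hd2 : (dparam μ)^2 = 1 - 3*μ + 3*μ^2 := Real.sq_sqrt (by nlinarith)
  have hd0' : (0:ℝ) ≤ dparam μ := Real.sqrt_nonneg _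
  have hdl : 1/2 ≤ dparam μ := by nlinarith [hd2, sq_nonneg (μ - 1/2)]
  have hdu : dparam μ < 1 := by nlinarith [hd2]
  have hb : 2 * lam1 μ + lam2 μ - 4 = (1 - 3*dparam μ)/2 := by rw [lam1, lam2]; ring
  have hc : 3 * lam1 μ * (lam2 μ - lam1 μ) = (27/2)*(dparam μ*(1 - dparam μ)) := by
    rw [lam1, lam2]; ring
  have hbneg : 2 * lam1 μ + lam2 μ - 4 < 0 := by rw [hb]; linarith
  have hcpos : 0 < 3 * lam1 μ * (lam2 μ - lam1 μ) := by
    rw [hc]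
    have h1 : (0:ℝ) < dparam μ := by linarith
    have h2 : (0:ℝ) < 1 - dparam μ := by linarith
    linarith [mul_pos h1 h2]
  have hdisc : (2 * lam1 μ + lam2 μ - 4)^2 - 4*(3 * lam1 μ * (lam2 μ - lam1 μ))
      = (225*(dparam μ)^2 - 222*dparam μ + 1)/4 := by rw [hb, hc]; ring
  refine ⟨?_, ?_, ?_⟩
  · -- μ < mu0
    intro hlt
    have hf : d0^2 < (dparam μ)^2 := by
      rw [hd2, ← hm]; linarith [mul_pos (by linarith : (0:ℝ) < mu0 - μ)
        (by linarith : (0:ℝ) < 1 - mu0 - μ)]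
    have hdd : d0 < dparam μ := by
      by_contra hcon
      push_neg at hcon
      have h2 : 0 ≤ (d0 - dparam μ) * (d0 + dparam μ) :=
        mul_nonneg (by linarith) (by linarith)
      linarith
    have hDpos : 0 < 225*(dparam μ)^2 - 222*dparam μ + 1 := by
      linarith [mul_pos (by linarith : (0:ℝ) < dparam μ - d0)
        (by linarith : (0:ℝ) < 225*(dparam μ + d0) - 222)]
    obtain ⟨ω₁, ω₂, h1, h2, hfac⟩ := quartic_two_pairs (2 * lam1 μ + lam2 μ - 4)
      (3 * lam1 μ * (lam2 μ - lam1 μ)) hbneg hcpos (by rw [hdisc]; linarith)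
    refine ⟨ω₁, ω₂, h1, h2, ?_⟩
    ext η
    simp only [rootSetL3, Set.mem_setOf_eq, Set.mem_insert_iff, Set.mem_singleton_iff]
    rw [hfac η]
    simp only [mul_eq_zero, sub_eq_zero, add_eq_zero_iff_eq_neg, or_assoc]
  · -- μ = mu0
    intro hEq
    have hsq : (dparam μ)^2 = d0^2 := by rw [hd2, hEq]; exact hm
    have hdd0 : dparam μ = d0 := by
      have h1 : (dparam μ - d0) * (dparam μ + d0) = 0 := by linear_combination hsq
      rcases mul_eq_zero.mp h1 with h | h
      · linarith
      · linarith
    have hD : (2 * lam1 μ + lam2 μ - 4)^2 = 4*(3 * lam1 μ * (lam2 μ - lam1 μ)) := by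
      have h1 : (225*(dparam μ)^2 - 222*dparam μ + 1) = 0 := by rw [hdd0]; exact hD0
      linarith [hdisc, h1.le, h1.ge]
    obtain ⟨ω, hω, hfac⟩ := quartic_double (2 * lam1 μ + lam2 μ - 4)
      (3 * lam1 μ * (lam2 μ - lam1 μ)) hbneg hD
    exact ⟨ω, hω, fun η => by rw [← hfac η]⟩
  · -- mu0 < μ
    intro hlt
    have hf : (dparam μ)^2 < d0^2 := by
      rw [hd2, ← hm]; linarith [mul_pos (by linarith : (0:ℝ) < μ - mu0)
        (by linarith : (0:ℝ) < 1 - mu0 - μ)]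
    have hdd : dparam μ < d0 := by
      by_contra hcon
      push_neg at hcon
      have h2 : 0 ≤ (dparam μ - d0) * (dparam μ + d0) :=
        mul_nonneg (by linarith) (by linarith)
      linarith
    have hDneg : 225*(dparam μ)^2 - 222*dparam μ + 1 < 0 := by
      linarith [mul_pos (by linarith : (0:ℝ) < d0 - dparam μ)
        (by linarith : (0:ℝ) < 225*(dparam μ + d0) - 222)]
    obtain ⟨α, ω, h1, h2, hfac⟩ := quartic_complex_roots (2 * lam1 μ + lam2 μ - 4)
      (3 * lam1 μ * (lam2 μ - lam1 μ)) hcpos (by rw [hdisc]; linarith)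
    refine ⟨α, ω, h1, h2, ?_⟩
    ext η
    simp only [rootSetL3, Set.mem_setOf_eq, Set.mem_insert_iff, Set.mem_singleton_iff]
    rw [hfac η]
    simp only [mul_eq_zero, sub_eq_zero, or_assoc]

end
end
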